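/- arXiv:1308.4495 — 3 statements merged into one kernel-verified Lean document; each statement's English description precedes it below -/
import Mathlib

section
/- Let A be an unbounded distributive pre-bilattice and let h : A → {0,1} be a map which is a lattice homomorphism from (A; ∨_t, ∧_t) to the two-element lattice 2 with 0 < 1. Then h is a lattice homomorphism from (A; ∨_k, ∧_k) either to 2 or to its order dual 2^∂. -/
/-- An unbounded distributive pre-bilattice: two lattice structures
`(∨_t, ∧_t)` and `(∨_k, ∧_k)` on the same carrier, with each of the four
operations distributing over each of the other three. -/
structure DPBU (A : Type*) where
  tsup : A → A → A
  tinf : A → A → A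
  ksup : A → A → A
  kinf : A → A → A
  tsup_comm : ∀ a b, tsup a b = tsup b a
  tinf_comm : ∀ a b, tinf a b = tinf b a
  tsup_assoc : ∀ a b c, tsup (tsup a b) c = tsup a (tsup b c)
  tinf_assoc : ∀ a b c, tinf (tinf a b) c = tinf a (tinf b c)
  tsup_absorb : ∀ a b, tsup a (tinf a b) = a
  tinf_absorb : ∀ a b, tinf a (tsup a b) = a
  ksup_comm : ∀ a b, ksup a b = ksup b a
  kinf_comm : ∀ a b, kinf a b = kinf b a
  ksup_assoc : ∀ a b c, ksup (ksup a b) c = ksup a (ksup b c)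
  kinf_assoc : ∀ a b c, kinf (kinf a b) c = kinf a (kinf b c)
  ksup_absorb : ∀ a b, ksup a (kinf a b) = a
  kinf_absorb : ∀ a b, kinf a (ksup a b) = a
  tsup_tinf : ∀ a b c, tsup a (tinf b c) = tinf (tsup a b) (tsup a c)
  tsup_ksup : ∀ a b c, tsup a (ksup b c) = ksup (tsup a b) (tsup a c)
  tsup_kinf : ∀ a b c, tsup a (kinf b c) = kinf (tsup a b) (tsup a c)
  tinf_tsup : ∀ a b c, tinf a (tsup b c) = tsup (tinf a b) (tinf a c)
  tinf_ksup : ∀ a b c, tinf a (ksup b c) = ksup (tinf a b) (tinf a c)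
  tinf_kinf : ∀ a b c, tinf a (kinf b c) = kinf (tinf a b) (tinf a c)
  ksup_tsup : ∀ a b c, ksup a (tsup b c) = tsup (ksup a b) (ksup a c)
  ksup_tinf : ∀ a b c, ksup a (tinf b c) = tinf (ksup a b) (ksup a c)
  ksup_kinf : ∀ a b c, ksup a (kinf b c) = kinf (ksup a b) (ksup a c)
  kinf_tsup : ∀ a b c, kinf a (tsup b c) = tsup (kinf a b) (kinf a c)
  kinf_tinf : ∀ a b c, kinf a (tinf b c) = tinf (kinf a b) (kinf a c)
  kinf_ksup : ∀ a b c, kinf a (ksup b c) = ksup (kinf a b) (kinf a c)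

/-- The truth order `≤_t`. -/
def DPBU.tle {A : Type*} (B : DPBU A) (a b : A) : Prop := B.tsup a b = b

/-- The knowledge order `≤_k`. -/
def DPBU.kle {A : Type*} (B : DPBU A) (a b : A) : Prop := B.ksup a b = b

/-!
Both k-operations are interlaced with the t-lattice: `a ∧_t b ≤_t a ∨_k b, a ∧_k b ≤_t a ∨_t b`,
and `(a ∨_k b) ∨_t (a ∧_k b) = a ∨_t b`, `(a ∨_k b) ∧_t (a ∧_k b) = a ∧_t b`. Pushed through `h`,
the first pair gives `h (a ∨_k b) = h (a ∧_k b) = h a` when `h a = h b`, and the second shows that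
`h (a ∨_k b)` and `h (a ∧_k b)` are complementary when `h a ≠ h b`. Distributivity of `∨_k` over
`∧_t` then makes `h (a ∨_k b)` depend on `h a` and `h b` only, so `∨_k` and `∧_k` induce binary
operations on `2` that are idempotent, commutative and complementary on `{0, 1}`: they are
`(max, min)` or `(min, max)`.
-/

namespace DPBU

variable {A : Type*} (B : DPBU A)

theorem tsup_idem (a : A) : B.tsup a a = a := by
  simpa only [B.tinf_absorb] using B.tsup_absorb a (B.tsup a a)

theorem tinf_idem (a : A) : B.tinf a a = a := by
  simpa only [B.tsup_absorb] using B.tinf_absorb a (B.tinf a a)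

theorem tle_of_tinf_eq {a b : A} (hab : B.tinf a b = a) : B.tle a b := by
  rw [tle, ← hab, B.tsup_comm, B.tinf_comm, B.tsup_absorb]

theorem tinf_tle_ksup (a b : A) : B.tle (B.tinf a b) (B.ksup a b) := by
  rw [tle, B.tsup_ksup, B.tsup_comm _ a, B.tsup_absorb, B.tsup_comm _ b, B.tinf_comm,
    B.tsup_absorb]

theorem tinf_tle_kinf (a b : A) : B.tle (B.tinf a b) (B.kinf a b) := by
  rw [tle, B.tsup_kinf, B.tsup_comm _ a, B.tsup_absorb, B.tsup_comm _ b, B.tinf_comm,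
    B.tsup_absorb]

theorem ksup_tle_tsup (a b : A) : B.tle (B.ksup a b) (B.tsup a b) := by
  refine B.tle_of_tinf_eq ?_
  rw [B.tinf_comm, B.tinf_ksup, B.tinf_comm _ a, B.tinf_absorb, B.tinf_comm _ b, B.tsup_comm,
    B.tinf_absorb]

theorem kinf_tle_tsup (a b : A) : B.tle (B.kinf a b) (B.tsup a b) := by
  refine B.tle_of_tinf_eq ?_
  rw [B.tinf_comm, B.tinf_kinf, B.tinf_comm _ a, B.tinf_absorb, B.tinf_comm _ b, B.tsup_comm,
    B.tinf_absorb]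

theorem kinf_kle_tsup (a b : A) : B.kle (B.kinf a b) (B.tsup a b) := by
  rw [kle, B.ksup_tsup, B.ksup_comm _ a, B.ksup_absorb, B.ksup_comm _ b, B.kinf_comm,
    B.ksup_absorb]

theorem kinf_kle_tinf (a b : A) : B.kle (B.kinf a b) (B.tinf a b) := by
  rw [kle, B.ksup_tinf, B.ksup_comm _ a, B.ksup_absorb, B.ksup_comm _ b, B.kinf_comm,
    B.ksup_absorb]

theorem tsup_ksup_kinf (a b : A) : B.tsup (B.ksup a b) (B.kinf a b) = B.tsup a b := by
  calc B.tsup (B.ksup a b) (B.kinf a b)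
      = B.kinf (B.ksup (B.tsup a b) a) (B.ksup (B.tsup a b) b) := by
        rw [B.tsup_kinf, B.tsup_comm (B.ksup a b) a, B.tsup_ksup, B.tsup_idem,
          B.tsup_comm (B.ksup a b) b, B.tsup_ksup, B.tsup_idem, B.tsup_comm b a,
          B.ksup_comm a]
    _ = B.tsup a b := by
        rw [← B.ksup_kinf, B.ksup_comm, B.kinf_kle_tsup]

theorem tinf_ksup_kinf (a b : A) : B.tinf (B.ksup a b) (B.kinf a b) = B.tinf a b := by
  calc B.tinf (B.ksup a b) (B.kinf a b)
      = B.kinf (B.ksup (B.tinf a b) a) (B.ksup (B.tinf a b) b) := by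
        rw [B.tinf_kinf, B.tinf_comm (B.ksup a b) a, B.tinf_ksup, B.tinf_idem,
          B.tinf_comm (B.ksup a b) b, B.tinf_ksup, B.tinf_idem, B.tinf_comm b a,
          B.ksup_comm a]
    _ = B.tinf a b := by
        rw [← B.ksup_kinf, B.ksup_comm, B.kinf_kle_tinf]

structure IsTruthHom (h : A → Bool) : Prop where
  map_tsup : ∀ a b, h (B.tsup a b) = (h a || h b)
  map_tinf : ∀ a b, h (B.tinf a b) = (h a && h b)

namespace IsTruthHom

variable {B} {h : A → Bool} (hh : B.IsTruthHom h)
include hh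

theorem map_le {a b : A} (hab : B.tle a b) : h a ≤ h b := by
  rw [← hab, hh.map_tsup]
  exact Bool.left_le_or _ _

theorem map_eq_of_tinf_tle_of_tle_tsup {a b c : A} (hab : h a = h b)
    (hlo : B.tle (B.tinf a b) c) (hhi : B.tle c (B.tsup a b)) : h c = h a := by
  have hlo := hh.map_le hlo
  have hhi := hh.map_le hhi
  rw [hh.map_tinf, hab, Bool.and_self] at hlo
  rw [hh.map_tsup, hab, Bool.or_self] at hhi
  rw [hab]
  exact le_antisymm hhi hlo

theorem map_ksup_of_map_eq {a b : A} (hab : h a = h b) : h (B.ksup a b) = h a :=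
  hh.map_eq_of_tinf_tle_of_tle_tsup hab (B.tinf_tle_ksup a b) (B.ksup_tle_tsup a b)

theorem map_kinf_of_map_eq {a b : A} (hab : h a = h b) : h (B.kinf a b) = h a :=
  hh.map_eq_of_tinf_tle_of_tle_tsup hab (B.tinf_tle_kinf a b) (B.kinf_tle_tsup a b)

theorem map_kinf_eq_not_map_ksup {a b : A} (hab : h a ≠ h b) :
    h (B.kinf a b) = !h (B.ksup a b) := by
  have hor := hh.map_tsup (B.ksup a b) (B.kinf a b)
  have hand := hh.map_tinf (B.ksup a b) (B.kinf a b)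
  rw [B.tsup_ksup_kinf, hh.map_tsup] at hor
  rw [B.tinf_ksup_kinf, hh.map_tinf] at hand
  revert hab hor hand
  cases h a <;> cases h b <;> cases h (B.ksup a b) <;> cases h (B.kinf a b) <;> decide

theorem map_ksup_congr_left {a a' : A} (b : A) (haa : h a = h a') :
    h (B.ksup a b) = h (B.ksup a' b) := by
  by_cases hab : h a = h b
  · rw [hh.map_ksup_of_map_eq hab, hh.map_ksup_of_map_eq (haa ▸ hab), haa]
  set c := B.tinf a a'
  have hc : h c = h a := by rw [hh.map_tinf, ← haa, Bool.and_self]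
  have hsup : h (B.ksup c b) = (h (B.ksup a b) && h (B.ksup a' b)) := by
    rw [B.ksup_comm, B.ksup_tinf, hh.map_tinf, B.ksup_comm b, B.ksup_comm b]
  have hinf : h (B.kinf c b) = (h (B.kinf a b) && h (B.kinf a' b)) := by
    rw [B.kinf_comm, B.kinf_tinf, hh.map_tinf, B.kinf_comm b, B.kinf_comm b]
  have hcompl := hh.map_kinf_eq_not_map_ksup (a := c) (b := b) (hc ▸ hab)
  rw [hinf, hsup, hh.map_kinf_eq_not_map_ksup hab,
    hh.map_kinf_eq_not_map_ksup (haa ▸ hab)] at hcompl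
  -- `x && y` and `!x && !y` are complementary only when `x = y`.
  revert hcompl
  cases h (B.ksup a b) <;> cases h (B.ksup a' b) <;> decide

theorem map_ksup_congr {a a' b b' : A} (haa : h a = h a') (hbb : h b = h b') :
    h (B.ksup a b) = h (B.ksup a' b') := by
  rw [hh.map_ksup_congr_left b haa, B.ksup_comm, hh.map_ksup_congr_left a' hbb, B.ksup_comm]

theorem map_ksup_kinf_eq_cond {a₀ b₀ : A} (ha₀ : h a₀ = true) (hb₀ : h b₀ = false) (a b : A) :
    h (B.ksup a b) = (bif h (B.ksup a₀ b₀) then h a || h b else h a && h b) ∧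
      h (B.kinf a b) = (bif h (B.ksup a₀ b₀) then h a && h b else h a || h b) := by
  by_cases hab : h a = h b
  · rw [hh.map_ksup_of_map_eq hab, hh.map_kinf_of_map_eq hab, ← hab]
    cases h a <;> cases h (B.ksup a₀ b₀) <;> decide
  rw [hh.map_kinf_eq_not_map_ksup hab]
  cases ha : h a <;> cases hb : h b
  · exact absurd (ha.trans hb.symm) hab
  · rw [B.ksup_comm, hh.map_ksup_congr (hb.trans ha₀.symm) (ha.trans hb₀.symm)]
    cases h (B.ksup a₀ b₀) <;> decide
  · rw [hh.map_ksup_congr (ha.trans ha₀.symm) (hb.trans hb₀.symm)]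
    cases h (B.ksup a₀ b₀) <;> decide
  · exact absurd (ha.trans hb.symm) hab

end IsTruthHom

end DPBU

/-- If `h : A → 2` is a lattice homomorphism from the t-lattice to the
two-element lattice, then `h` is a lattice homomorphism from the k-lattice
either to `2` or to its order dual `2^∂`. -/
theorem stmt_5 {A : Type*} (B : DPBU A) (h : A → Bool)
    (hsup : ∀ a b, h (B.tsup a b) = (h a || h b))
    (hinf : ∀ a b, h (B.tinf a b) = (h a && h b)) :
    (∀ a b, h (B.ksup a b) = (h a || h b) ∧ h (B.kinf a b) = (h a && h b)) ∨
    (∀ a b, h (B.ksup a b) = (h a && h b) ∧ h (B.kinf a b) = (h a || h b)) := by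
  have hh : B.IsTruthHom h := ⟨hsup, hinf⟩
  by_cases hsep : ∃ a₀ b₀, h a₀ = true ∧ h b₀ = false
  · obtain ⟨a₀, b₀, ha₀, hb₀⟩ := hsep
    have hcond := hh.map_ksup_kinf_eq_cond ha₀ hb₀
    cases hs : h (B.ksup a₀ b₀)
    · exact Or.inr fun a b => by simpa only [hs, cond_false] using hcond a b
    · exact Or.inl fun a b => by simpa only [hs, cond_true] using hcond a b
  push Not at hsep
  have hconst : ∀ a b, h a = h b := fun a b => by
    cases ha : h a <;> cases hb : h b
    · rfl
    · exact absurd ha (hsep b a hb)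
    · exact absurd hb (hsep a b ha)
    · rfl
  refine Or.inl fun a b => ⟨?_, ?_⟩
  · rw [hh.map_ksup_of_map_eq (hconst a b), ← hconst a b, Bool.or_self]
  · rw [hh.map_kinf_of_map_eq (hconst a b), ← hconst a b, Bool.and_self]
end

section
/- Every prime filter of the t-lattice of an unbounded distributive pre-bilattice A is either a prime filter or a prime ideal of the k-lattice of A. -/
/-- `F` is a prime filter for the order/operations `le`, `sup`, `inf`. -/
def IsPrimeFilter {A : Type*} (le : A → A → Prop) (sup inf : A → A → A)
    (F : Set A) : Prop :=
  F.Nonempty ∧ F ≠ Set.univ ∧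
  (∀ a b, a ∈ F → le a b → b ∈ F) ∧
  (∀ a b, a ∈ F → b ∈ F → inf a b ∈ F) ∧
  (∀ a b, sup a b ∈ F → a ∈ F ∨ b ∈ F)

/-- `F` is a prime ideal for the order/operations `le`, `sup`, `inf`. -/
def IsPrimeIdeal {A : Type*} (le : A → A → Prop) (sup inf : A → A → A)
    (F : Set A) : Prop :=
  F.Nonempty ∧ F ≠ Set.univ ∧
  (∀ a b, a ∈ F → le b a → b ∈ F) ∧
  (∀ a b, a ∈ F → b ∈ F → sup a b ∈ F) ∧
  (∀ a b, inf a b ∈ F → a ∈ F ∨ b ∈ F)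

/-!
Distributivity puts both k-operations between the t-operations: `a ∧_t b ≤_t a ∘ b ≤_t a ∨_t b`
for `∘ ∈ {∧_k, ∨_k}`. Hence a prime filter `F` of the t-lattice is closed under `∧_k`, `∨_k` and
prime for both. If `F` is not `≤_k`-upward closed, pick `a ∈ F` and `a ≤_k b ∉ F`. For `c ∈ F` and
`d ≤_k c` we have `a ∧_t c ≤_t b ∨_t d`, so `b ∨_t d ∈ F` and primality forces `d ∈ F`: then `F` is
`≤_k`-downward closed, i.e. a prime ideal of the k-lattice.
-/

namespace DPBU

variable {A : Type*} (B : DPBU A)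

/-- `Lattice.mk'` orders a lattice by `a ⊔ b = b`, so the order of this lattice is `B.tle` by
definition and Mathlib's lattice lemmas transfer to `≤_t` verbatim (likewise for `kLattice`). -/
abbrev tLattice : Lattice A :=
  @Lattice.mk' A ⟨B.tsup⟩ ⟨B.tinf⟩ B.tsup_comm B.tsup_assoc B.tinf_comm B.tinf_assoc
    B.tsup_absorb B.tinf_absorb

abbrev kLattice : Lattice A :=
  @Lattice.mk' A ⟨B.ksup⟩ ⟨B.kinf⟩ B.ksup_comm B.ksup_assoc B.kinf_comm B.kinf_assoc
    B.ksup_absorb B.kinf_absorb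

theorem tle_trans {a b c : A} : B.tle a b → B.tle b c → B.tle a c :=
  @le_trans A B.tLattice.toPreorder a b c

theorem tle_tsup_left (a b : A) : B.tle a (B.tsup a b) :=
  @le_sup_left A B.tLattice.toSemilatticeSup a b

theorem tle_tsup_right (a b : A) : B.tle b (B.tsup a b) :=
  @le_sup_right A B.tLattice.toSemilatticeSup a b

theorem tinf_tle_left (a b : A) : B.tle (B.tinf a b) a :=
  @inf_le_left A B.tLattice.toSemilatticeInf a b

theorem tinf_tle_right (a b : A) : B.tle (B.tinf a b) b :=
  @inf_le_right A B.tLattice.toSemilatticeInf a b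

theorem tsup_eq_left {a b : A} : B.tsup a b = a ↔ B.tle b a :=
  @sup_eq_left A B.tLattice.toSemilatticeSup a b

theorem ksup_idem (a : A) : B.ksup a a = a := @sup_idem A B.kLattice.toSemilatticeSup a

theorem kinf_idem (a : A) : B.kinf a a = a := @inf_idem A B.kLattice.toSemilatticeInf a

theorem kle_antisymm {a b : A} : B.kle a b → B.kle b a → a = b :=
  @le_antisymm A B.kLattice.toPartialOrder a b

theorem tinf_tle_of_tsup_distrib (op : A → A → A)
    (hdist : ∀ a b c, B.tsup a (op b c) = op (B.tsup a b) (B.tsup a c)) (a b : A) :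
    B.tle (B.tinf a b) (op a b) :=
  (hdist _ _ _).trans (congrArg₂ op (B.tinf_tle_left a b) (B.tinf_tle_right a b))

theorem tle_tsup_of_tsup_distrib (op : A → A → A)
    (hdist : ∀ a b c, B.tsup a (op b c) = op (B.tsup a b) (B.tsup a c))
    (hidem : ∀ a, op a a = a) (a b : A) : B.tle (op a b) (B.tsup a b) := by
  have hself : ∀ x, B.tle x (B.tsup a b) → B.tsup (B.tsup a b) x = B.tsup a b :=
    fun _ => B.tsup_eq_left.2
  calc B.tsup (op a b) (B.tsup a b)
      = op (B.tsup (B.tsup a b) a) (B.tsup (B.tsup a b) b) := by rw [B.tsup_comm, hdist]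
    _ = B.tsup a b := by
      rw [hself a (B.tle_tsup_left a b), hself b (B.tle_tsup_right a b), hidem]

theorem tinf_kle_tinf_left (a : A) {b c : A} (h : B.kle b c) :
    B.kle (B.tinf a b) (B.tinf a c) := by
  unfold kle at *
  rw [← B.tinf_ksup, h]

theorem tinf_kle_tinf_right (a : A) {b c : A} (h : B.kle b c) :
    B.kle (B.tinf b a) (B.tinf c a) := by
  rw [B.tinf_comm b, B.tinf_comm c]
  exact B.tinf_kle_tinf_left a h

theorem tsup_kle_tsup_left (a : A) {b c : A} (h : B.kle b c) :
    B.kle (B.tsup a b) (B.tsup a c) := by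
  unfold kle at *
  rw [← B.tsup_ksup, h]

/-- Squeeze `y ∨_t (a ∧_t c)` between `y ∨_t (b ∧_t c)` and `y ∨_t (a ∧_t d)` in `≤_k`; both bounds
equal `y = b ∨_t d`. -/
theorem tinf_tle_tsup_of_kle {a b c d : A} (hab : B.kle a b) (hdc : B.kle d c) :
    B.tle (B.tinf a c) (B.tsup b d) := by
  set y := B.tsup b d
  have hb : B.tsup y (B.tinf b c) = y :=
    B.tsup_eq_left.2 (B.tle_trans (B.tinf_tle_left b c) (B.tle_tsup_left b d))
  have hd : B.tsup y (B.tinf a d) = y :=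
    B.tsup_eq_left.2 (B.tle_trans (B.tinf_tle_right a d) (B.tle_tsup_right b d))
  have hupper : B.kle (B.tsup y (B.tinf a c)) y := by
    simpa only [hb] using B.tsup_kle_tsup_left y (B.tinf_kle_tinf_right c hab)
  have hlower : B.kle y (B.tsup y (B.tinf a c)) := by
    simpa only [hd] using B.tsup_kle_tsup_left y (B.tinf_kle_tinf_left a hdc)
  exact B.tsup_eq_left.1 (B.kle_antisymm hupper hlower)

end DPBU

/-- Every prime filter of the t-lattice of an unbounded distributive
pre-bilattice is either a prime filter or a prime ideal of the k-lattice. -/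
theorem stmt_6 {A : Type*} (B : DPBU A) (F : Set A)
    (hF : IsPrimeFilter B.tle B.tsup B.tinf F) :
    IsPrimeFilter B.kle B.ksup B.kinf F ∨ IsPrimeIdeal B.kle B.ksup B.kinf F := by
  obtain ⟨hne, hproper, hup, hinf, hprime⟩ := hF
  have ksup_mem : ∀ a b, a ∈ F → b ∈ F → B.ksup a b ∈ F := fun a b ha hb =>
    hup _ _ (hinf a b ha hb) (B.tinf_tle_of_tsup_distrib _ B.tsup_ksup a b)
  have kinf_mem : ∀ a b, a ∈ F → b ∈ F → B.kinf a b ∈ F := fun a b ha hb =>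
    hup _ _ (hinf a b ha hb) (B.tinf_tle_of_tsup_distrib _ B.tsup_kinf a b)
  have ksup_prime : ∀ a b, B.ksup a b ∈ F → a ∈ F ∨ b ∈ F := fun a b h =>
    hprime a b (hup _ _ h (B.tle_tsup_of_tsup_distrib _ B.tsup_ksup B.ksup_idem a b))
  have kinf_prime : ∀ a b, B.kinf a b ∈ F → a ∈ F ∨ b ∈ F := fun a b h =>
    hprime a b (hup _ _ h (B.tle_tsup_of_tsup_distrib _ B.tsup_kinf B.kinf_idem a b))
  by_cases hkup : ∀ a b, a ∈ F → B.kle a b → b ∈ F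
  · exact Or.inl ⟨hne, hproper, hkup, kinf_mem, ksup_prime⟩
  push Not at hkup
  obtain ⟨a, b, ha, hab, hb⟩ := hkup
  refine Or.inr ⟨hne, hproper, fun c d hc hdc => ?_, ksup_mem, kinf_prime⟩
  have hbd : B.tsup b d ∈ F := hup _ _ (hinf a c ha hc) (B.tinf_tle_tsup_of_kle hab hdc)
  exact (hprime b d hbd).resolve_left hb
end

section
/- Let A be a distributive bilattice and x : A → {0,1} a bounded lattice homomorphism from the t-lattice reduct of A to 2 with x(0_k) = 0. Then the map h : A → 4 defined by h(c) = (x(c), 1 − x(¬c)) (viewing elements of 4 as pairs in {0,1}²) is a bilattice homomorphism from A to the four-element distributive bilattice 4. -/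
/-- A (bounded) distributive bilattice: bounded distributive t-lattice,
k-bounds `0_k`, `1_k`, k-operations given by the 90° Lemma formulas, and an
involutory negation which is a dual endomorphism of the bounded t-lattice
and an endomorphism of the bounded k-lattice. -/
structure DB (A : Type*) extends DPBU A where
  neg : A → A
  tbot : A
  ttop : A
  kbot : A
  ktop : A
  tbot_le : ∀ a, tsup tbot a = a
  le_ttop : ∀ a, tsup a ttop = ttop
  kbot_le : ∀ a, ksup kbot a = a
  le_ktop : ∀ a, ksup a ktop = ktop
  ksup_def : ∀ a b, ksup a b = tsup (tinf (tinf a b) kbot) (tinf (tsup a b) ktop)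
  kinf_def : ∀ a b, kinf a b = tsup (tinf (tinf a b) ktop) (tinf (tsup a b) kbot)
  neg_neg : ∀ a, neg (neg a) = a
  neg_tsup : ∀ a b, neg (tsup a b) = tinf (neg a) (neg b)
  neg_tinf : ∀ a b, neg (tinf a b) = tsup (neg a) (neg b)
  neg_ksup : ∀ a b, neg (ksup a b) = ksup (neg a) (neg b)
  neg_kinf : ∀ a b, neg (kinf a b) = kinf (neg a) (neg b)
  neg_tbot : neg tbot = ttop
  neg_ttop : neg ttop = tbot
  neg_kbot : neg kbot = kbot
  neg_ktop : neg ktop = ktop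

/-- The four-element distributive bilattice `4` (= FOUR with bounds), on binary
strings `{00,01,10,11}` represented as `Bool × Bool` (so `00 = (false,false)`
etc.).  The t-order has bottom `00` and top `11`; the k-order has bottom `01`
and top `10`; negation swaps `00 ↔ 11` and fixes `01`, `10`. -/
def fourDB : DB (Bool × Bool) where
  tsup p q := (p.1 || q.1, p.2 || q.2)
  tinf p q := (p.1 && q.1, p.2 && q.2)
  ksup p q := (p.1 || q.1, p.2 && q.2)
  kinf p q := (p.1 && q.1, p.2 || q.2)
  neg p := (!p.2, !p.1)
  tbot := (false, false)
  ttop := (true, true)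
  kbot := (false, true)
  ktop := (true, false)
  tsup_comm := by decide
  tinf_comm := by decide
  tsup_assoc := by decide
  tinf_assoc := by decide
  tsup_absorb := by decide
  tinf_absorb := by decide
  ksup_comm := by decide
  kinf_comm := by decide
  ksup_assoc := by decide
  kinf_assoc := by decide
  ksup_absorb := by decide
  kinf_absorb := by decide
  tsup_tinf := by decide
  tsup_ksup := by decide
  tsup_kinf := by decide
  tinf_tsup := by decide
  tinf_ksup := by decide
  tinf_kinf := by decide
  ksup_tsup := by decide
  ksup_tinf := by decide
  ksup_kinf := by decide
  kinf_tsup := by decide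
  kinf_tinf := by decide
  kinf_ksup := by decide
  tbot_le := by decide
  le_ttop := by decide
  kbot_le := by decide
  le_ktop := by decide
  ksup_def := by decide
  kinf_def := by decide
  neg_neg := by decide
  neg_tsup := by decide
  neg_tinf := by decide
  neg_ksup := by decide
  neg_kinf := by decide
  neg_tbot := by decide
  neg_ttop := by decide
  neg_kbot := by decide
  neg_ktop := by decide

namespace DB

variable {A : Type*} (B : DB A)

theorem tinf_ttop (a : A) : B.tinf a B.ttop = a := by
  simpa only [B.le_ttop] using B.tinf_absorb a B.ttop

theorem tinf_self (a : A) : B.tinf a a = a := by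
  simpa only [B.tsup_absorb] using B.tinf_absorb a (B.tinf a a)

/-- Read off from `0_k ∨_k 1_t = 1_t` through the formula for `∨_k`. -/
theorem tsup_kbot_ktop : B.tsup B.kbot B.ktop = B.ttop := by
  have h := B.kbot_le B.ttop
  rwa [B.ksup_def, B.tinf_ttop, B.tinf_self, B.le_ttop, B.tinf_comm, B.tinf_ttop] at h

def toFour (x : A → Bool) (c : A) : Bool × Bool := (x c, !x (B.neg c))

section TLatticeHom

variable {B} {x : A → Bool}

theorem toFour_tsup (hsup : ∀ a b, x (B.tsup a b) = (x a || x b))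
    (hinf : ∀ a b, x (B.tinf a b) = (x a && x b)) (a b : A) :
    B.toFour x (B.tsup a b) = fourDB.tsup (B.toFour x a) (B.toFour x b) := by
  simp only [toFour, fourDB, B.neg_tsup, hsup, hinf, Bool.not_and]

theorem toFour_tinf (hsup : ∀ a b, x (B.tsup a b) = (x a || x b))
    (hinf : ∀ a b, x (B.tinf a b) = (x a && x b)) (a b : A) :
    B.toFour x (B.tinf a b) = fourDB.tinf (B.toFour x a) (B.toFour x b) := by
  simp only [toFour, fourDB, B.neg_tinf, hsup, hinf, Bool.not_or]

theorem toFour_neg (a : A) : B.toFour x (B.neg a) = fourDB.neg (B.toFour x a) := by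
  simp only [toFour, fourDB, B.neg_neg, Bool.not_not]

theorem toFour_tbot (hbot : x B.tbot = false) (htop : x B.ttop = true) :
    B.toFour x B.tbot = fourDB.tbot := by
  simp only [toFour, fourDB, B.neg_tbot, hbot, htop, Bool.not_true]

theorem toFour_ttop (hbot : x B.tbot = false) (htop : x B.ttop = true) :
    B.toFour x B.ttop = fourDB.ttop := by
  simp only [toFour, fourDB, B.neg_ttop, hbot, htop, Bool.not_false]

theorem toFour_kbot (hkbot : x B.kbot = false) : B.toFour x B.kbot = fourDB.kbot := by
  simp only [toFour, fourDB, B.neg_kbot, hkbot, Bool.not_false]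

theorem apply_ktop_eq_true (hsup : ∀ a b, x (B.tsup a b) = (x a || x b))
    (htop : x B.ttop = true) (hkbot : x B.kbot = false) : x B.ktop = true := by
  simpa only [hsup, hkbot, htop, Bool.false_or] using congrArg x B.tsup_kbot_ktop

theorem toFour_ktop (hsup : ∀ a b, x (B.tsup a b) = (x a || x b))
    (htop : x B.ttop = true) (hkbot : x B.kbot = false) :
    B.toFour x B.ktop = fourDB.ktop := by
  simp only [toFour, fourDB, B.neg_ktop, apply_ktop_eq_true hsup htop hkbot, Bool.not_true]

end TLatticeHom

end DB

/-- If `x : A → 2` is a bounded lattice homomorphism from the t-lattice reduct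
with `x(0_k) = 0`, then `h(c) = (x(c), 1 - x(¬c))` is a bilattice homomorphism
from `A` to `4`. -/
theorem stmt_13 {A : Type*} (B : DB A) (x : A → Bool)
    (hsup : ∀ a b, x (B.tsup a b) = (x a || x b))
    (hinf : ∀ a b, x (B.tinf a b) = (x a && x b))
    (hbot : x B.tbot = false) (htop : x B.ttop = true)
    (hkbot : x B.kbot = false) :
    ∀ h : A → Bool × Bool, (∀ c, h c = (x c, !(x (B.neg c)))) →
      (∀ a b, h (B.tsup a b) = fourDB.tsup (h a) (h b)) ∧
      (∀ a b, h (B.tinf a b) = fourDB.tinf (h a) (h b)) ∧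
      (∀ a, h (B.neg a) = fourDB.neg (h a)) ∧
      h B.tbot = fourDB.tbot ∧ h B.ttop = fourDB.ttop ∧
      h B.kbot = fourDB.kbot ∧ h B.ktop = fourDB.ktop := by
  intro h hh
  obtain rfl : h = B.toFour x := funext hh
  exact ⟨DB.toFour_tsup hsup hinf, DB.toFour_tinf hsup hinf, DB.toFour_neg,
    DB.toFour_tbot hbot htop, DB.toFour_ttop hbot htop, DB.toFour_kbot hkbot,
    DB.toFour_ktop hsup htop hkbot⟩
end
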